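/- arXiv:1706.06963 — 4 statements merged into one kernel-verified Lean document; each statement's English description precedes it below -/
import Mathlib

section
/- With ε_K = (N+2)/(N+1+d) and ε_M = 2/(d+1), the knowledge gain satisfies ε_K − ε_M > ((d−1)/(d+1)) · (N/(N+2)) · (1/(d·ε_S)) where ε_S = 1/(N+1) + N/(d(N+1)), for all integers N ≥ 1, d ≥ 2. -/
/-! The knowledge gain simplifies to `ε_K − ε_M = ((d−1)/(d+1)) · N/(N+1+d)`, and `d·ε_S = (N+d)/(N+1)`,
so after cancelling the common factor `(d−1)/(d+1)` the claim is `(N+1)/((N+2)(N+d)) < 1/(N+1+d)`,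
which holds because `(N+2)(N+d) − (N+1)(N+1+d) = d − 1 > 0`. -/

lemma div_sub_two_div_eq (n d : ℝ) (hd : d + 1 ≠ 0) (hnd : n + 1 + d ≠ 0) :
    (n + 2) / (n + 1 + d) - 2 / (d + 1) = (d - 1) / (d + 1) * (n / (n + 1 + d)) := by
  field_simp
  ring

lemma mul_one_div_add_div_eq (n d : ℝ) (hd : d ≠ 0) (hn : n + 1 ≠ 0) :
    d * (1 / (n + 1) + n / (d * (n + 1))) = (d + n) / (n + 1) := by
  field_simp

lemma div_mul_div_lt_div (n d : ℝ) (hn : 0 < n) (hd : 1 < d) :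
    n / (n + 2) * ((n + 1) / (d + n)) < n / (n + 1 + d) := by
  rw [div_mul_div_comm, div_lt_div_iff₀ (by positivity) (by linarith)]
  have hgap : (n + 2) * (d + n) = (n + 1) * (n + 1 + d) + (d - 1) := by ring
  nlinarith [mul_pos hn (sub_pos.mpr hd)]

/-- With `ε_K = (N+2)/(N+1+d)`, `ε_M = 2/(d+1)` and
`ε_S = 1/(N+1) + N/(d(N+1))`, the knowledge gain satisfies
`ε_K − ε_M > ((d−1)/(d+1))·(N/(N+2))·(1/(d·ε_S))` for integers `N ≥ 1`, `d ≥ 2`. -/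
theorem knowledge_gain_bound
    (N d : ℕ) (hN : 1 ≤ N) (hd : 2 ≤ d) :
    ((d : ℝ) - 1) / (d + 1) * (N / (N + 2)) *
        (1 / (d * (1 / (N + 1) + N / (d * (N + 1))))) <
      ((N : ℝ) + 2) / (N + 1 + d) - 2 / (d + 1) := by
  have hn : (0 : ℝ) < N := by exact_mod_cast hN
  have hd' : (1 : ℝ) < d := by exact_mod_cast hd
  rw [div_sub_two_div_eq _ _ (by positivity) (by positivity),
    mul_one_div_add_div_eq _ _ (by positivity) (by positivity), one_div_div, mul_assoc]
  exact mul_lt_mul_of_pos_left (div_mul_div_lt_div _ _ hn hd')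
    (div_pos (by linarith) (by positivity))
end

section
/- Let X_N ~ Binomial(N, 1/d), q = ⌈(N+1)/d⌉, and ε_C(N) = Σ_{x=q}^{N} P(X_N = x)·(x+1−q)/(x+1). Then ε_C(N) → 0 as N → ∞ (with d fixed). -/
/-!
Write `p = 1/d` and `q = ⌈(N+1)/d⌉`, so that `q > Np`. For `q ≤ x` the weight satisfies
`(x+1-q)/(x+1) ≤ (x+1-q)/q ≤ (|x - Np| + 1)/q`, hence `ε_C(N) ≤ (E|X_N - Np| + 1)/q`.
By Cauchy–Schwarz `E|X_N - Np| ≤ √Var X_N ≤ √N`, so `ε_C(N) ≤ d(√N + 1)/N → 0`.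
The binomial moments are the Bernstein polynomial identities evaluated at `p`.
-/

open Finset Filter

/-- The binomial probability `P(X_N = x)` for `X_N ~ Binomial(N, 1/d)`. -/
noncomputable def binomPMF (N d x : ℕ) : ℝ :=
  (N.choose x : ℝ) * (1 / d) ^ x * (1 - 1 / d) ^ (N - x)

lemma binomPMF_eq_eval_bernsteinPolynomial (N d x : ℕ) :
    binomPMF N d x = (bernsteinPolynomial ℝ N x).eval ((1 : ℝ) / d) := by
  simp [binomPMF, bernsteinPolynomial]

lemma binomPMF_nonneg (N d x : ℕ) : 0 ≤ binomPMF N d x :=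
  mul_nonneg (by positivity) (pow_nonneg (Nat.one_sub_one_div_cast_nonneg d) _)

lemma sum_binomPMF (N d : ℕ) : ∑ x ∈ range (N + 1), binomPMF N d x = 1 := by
  simpa [Polynomial.eval_finsetSum, binomPMF_eq_eval_bernsteinPolynomial] using
    congrArg (Polynomial.eval ((1 : ℝ) / d)) (bernsteinPolynomial.sum ℝ N)

lemma sum_sq_sub_mul_binomPMF (N d : ℕ) :
    ∑ x ∈ range (N + 1), ((N : ℝ) * (1 / d) - x) ^ 2 * binomPMF N d x
      = (N : ℝ) * (1 / d) * (1 - 1 / d) := by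
  simpa [Polynomial.eval_finsetSum, binomPMF_eq_eval_bernsteinPolynomial, nsmul_eq_mul] using
    congrArg (Polynomial.eval ((1 : ℝ) / d)) (bernsteinPolynomial.variance ℝ N)

lemma sum_binomPMF_mul_abs_sub_le_sqrt (N d : ℕ) :
    ∑ x ∈ range (N + 1), binomPMF N d x * |(x : ℝ) - N * (1 / d)| ≤ √N := by
  have hvar : (N : ℝ) * (1 / d) * (1 - 1 / d) ≤ N :=
    calc (N : ℝ) * (1 / d) * (1 - 1 / d) ≤ N * (1 / d) :=
          mul_le_of_le_one_right (by positivity) (Nat.one_sub_one_div_cast_le_one d)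
      _ ≤ N := mul_le_of_le_one_right (Nat.cast_nonneg N) (one_div (d : ℝ) ▸ Nat.cast_inv_le_one d)
  refine Real.le_sqrt_of_sq_le ?_
  calc (∑ x ∈ range (N + 1), binomPMF N d x * |(x : ℝ) - N * (1 / d)|) ^ 2
      ≤ (∑ x ∈ range (N + 1), binomPMF N d x) *
          ∑ x ∈ range (N + 1), ((N : ℝ) * (1 / d) - x) ^ 2 * binomPMF N d x := by
        refine sum_sq_le_sum_mul_sum_of_sq_le_mul _ (fun x _ => binomPMF_nonneg N d x)
          (fun x _ => mul_nonneg (sq_nonneg _) (binomPMF_nonneg N d x)) fun x _ => ?_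
        rw [mul_pow, sq_abs]
        exact le_of_eq (by ring)
    _ ≤ N := by rw [sum_binomPMF, sum_sq_sub_mul_binomPMF, one_mul]; exact hvar

lemma sub_div_le_abs_sub_add_one_div {x q m : ℝ} (hq : 0 < q) (hqx : q ≤ x) (hmq : m ≤ q) :
    (x + 1 - q) / (x + 1) ≤ (|x - m| + 1) / q :=
  div_le_div₀ (by positivity) (by linarith [le_abs_self (x - m)]) hq (by linarith)

lemma natCast_div_lt_add_div (N : ℕ) {d : ℕ} (hd : 0 < d) :
    (N : ℝ) / d < ((N + d) / d : ℕ) := by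
  rw [div_lt_iff₀ (by positivity), mul_comm]
  exact_mod_cast Nat.add_div_right N hd ▸ Nat.lt_mul_div_succ N hd

lemma sum_Icc_binomPMF_mul_le (N : ℕ) {d : ℕ} (hd : 0 < d) :
    ∑ x ∈ Icc ((N + d) / d) N,
        binomPMF N d x * (((x : ℝ) + 1 - ((N + d) / d : ℕ)) / (x + 1))
      ≤ (√N + 1) / ((N + d) / d : ℕ) := by
  set q := (N + d) / d
  have hq : (0 : ℝ) < q := (div_nonneg (by positivity) (by positivity)).trans_lt
    (natCast_div_lt_add_div N hd)
  have hmq : (N : ℝ) * (1 / d) ≤ q := by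
    rw [mul_one_div]; exact (natCast_div_lt_add_div N hd).le
  calc ∑ x ∈ Icc q N, binomPMF N d x * (((x : ℝ) + 1 - q) / (x + 1))
      ≤ ∑ x ∈ range (N + 1), binomPMF N d x * ((|(x : ℝ) - N * (1 / d)| + 1) / q) := by
        refine (sum_le_sum fun x hx => ?_).trans (sum_le_sum_of_subset_of_nonneg ?_ ?_)
        · have hqx : (q : ℝ) ≤ x := by exact_mod_cast (mem_Icc.1 hx).1
          exact mul_le_mul_of_nonneg_left (sub_div_le_abs_sub_add_one_div hq hqx hmq)
            (binomPMF_nonneg N d x)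
        · intro x hx
          simp only [mem_Icc, mem_range] at hx ⊢
          omega
        · exact fun x _ _ => mul_nonneg (binomPMF_nonneg N d x) (by positivity)
    _ = ((∑ x ∈ range (N + 1), binomPMF N d x * |(x : ℝ) - N * (1 / d)|)
          + ∑ x ∈ range (N + 1), binomPMF N d x) / q := by
        rw [← sum_add_distrib, sum_div]
        exact sum_congr rfl fun x _ => by ring
    _ ≤ (√N + 1) / q := by
        rw [sum_binomPMF]
        gcongr
        exact sum_binomPMF_mul_abs_sub_le_sqrt N d

lemma tendsto_sqrt_add_one_mul_div_atTop (c : ℝ) :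
    Tendsto (fun N : ℕ => (√N + 1) * c / N) atTop (nhds 0) := by
  have hsqrt : Tendsto (fun N : ℕ => √(N : ℝ)) atTop atTop :=
    Real.tendsto_sqrt_atTop.comp tendsto_natCast_atTop_atTop
  have hlim :=
    (hsqrt.inv_tendsto_atTop.add (tendsto_inv_atTop_nhds_zero_nat (𝕜 := ℝ))).const_mul c
  rw [add_zero, mul_zero] at hlim
  simp only [Pi.inv_apply] at hlim
  refine hlim.congr' ?_
  filter_upwards [eventually_gt_atTop 0] with N hN
  have hss := Real.mul_self_sqrt (Nat.cast_nonneg (α := ℝ) N)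
  field_simp
  linear_combination (-c) * hss

/-- With `q = ⌈(N+1)/d⌉` and
`ε_C(N) = Σ_{x=q}^{N} P(X_N = x)·(x+1−q)/(x+1)`, completeness failure tends to zero:
`ε_C(N) → 0` as `N → ∞` for fixed `d ≥ 2`. -/
theorem completeness_tendsto_zero (d : ℕ) (hd : 2 ≤ d) :
    Tendsto
      (fun N : ℕ =>
        ∑ x ∈ Icc ((N + d) / d) N,
          binomPMF N d x * (((x : ℝ) + 1 - ((N + d) / d : ℕ)) / (x + 1)))
      atTop (nhds 0) := by
  have hd0 : 0 < d := by omega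
  refine squeeze_zero' (Eventually.of_forall fun N => sum_nonneg fun x hx => ?_) ?_
    (tendsto_sqrt_add_one_mul_div_atTop d)
  · have hqx : (((N + d) / d : ℕ) : ℝ) ≤ x := by exact_mod_cast (mem_Icc.1 hx).1
    exact mul_nonneg (binomPMF_nonneg N d x) (div_nonneg (by linarith) (by positivity))
  · filter_upwards [eventually_gt_atTop 0] with N hN
    refine (sum_Icc_binomPMF_mul_le N hd0).trans ?_
    rw [← div_div_eq_mul_div]
    exact div_le_div_of_nonneg_left (by positivity) (by positivity)
      (natCast_div_lt_add_div N hd0).le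
end

section
/- If for every bit position i and all pairs of indices r ≠ s the unveiling probabilities satisfy p_i(0|r) + p_i(1|s) ≤ 1 (binding commitments), and the unveiled bit values are determined by these per-bit distributions, then the distribution of unveiled commitment values is independent of the index told to Alice; consequently her success probability in matching a uniformly random index with one of q commitments is at most q/(N+1). -/
open Finset

/-!
Determinacy `p₀(r) + p₁(r) = 1` combined with binding `p₀(r) + p₁(s) ≤ 1` gives `p₁(s) ≤ p₁(r)`
for all `r, s`, so both unveiling probabilities are constant in the index. With
index-independent unveilings, the chance that a uniform index is hit by one of the commitments
is at most the total unveiling mass `∑ⱼ ∑ᵣ g j r ≤ q`, divided by `N + 1`.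
-/

theorem eq_of_add_eq_one_of_cross_add_le_one {ι : Type*} {f : Bool → ι → ℝ}
    (hdet : ∀ r, f false r + f true r = 1) (hbind : ∀ r s, f false r + f true s ≤ 1)
    (b : Bool) (r s : ι) : f b r = f b s := by
  have htrue : ∀ r s, f true r = f true s := fun r s => by
    linarith [hbind r s, hbind s r, hdet r, hdet s]
  cases b with
  | true => exact htrue r s
  | false => linarith [hdet r, hdet s, htrue r s]

theorem sum_min_one_sum_le_card {ι κ : Type*} [Fintype ι] [Fintype κ] (g : κ → ι → ℝ)
    (hg : ∀ j, ∑ r, g j r ≤ 1) : ∑ r, min 1 (∑ j, g j r) ≤ Fintype.card κ :=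
  calc ∑ r, min 1 (∑ j, g j r)
      ≤ ∑ r, ∑ j, g j r := sum_le_sum fun r _ => min_le_right _ _
    _ = ∑ j, ∑ r, g j r := sum_comm
    _ ≤ ∑ _j : κ, (1 : ℝ) := sum_le_sum fun j _ => hg j
    _ = Fintype.card κ := by simp

/-- `g j r` is the index-independent probability that commitment `j` unveils to the value `r`;
the left-hand side of the soundness bound is Alice's success probability for a uniform index. -/
theorem binding_implies_index_independence_and_soundness_general
    (N q B : ℕ)
    (p : Fin q → Fin B → Bool → Fin (N + 1) → ℝ)
    (hdet : ∀ j i r, p j i false r + p j i true r = 1)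
    (hbind : ∀ j i r s, p j i false r + p j i true s ≤ 1) :
    (∀ j i b r s, p j i b r = p j i b s) ∧
      (∀ g : Fin q → Fin (N + 1) → ℝ,
        (∀ j r, 0 ≤ g j r) → (∀ j, ∑ r, g j r ≤ 1) →
        ∑ r, (1 / ((N : ℝ) + 1)) * min 1 (∑ j, g j r) ≤ q / ((N : ℝ) + 1)) := by
  refine ⟨fun j i => eq_of_add_eq_one_of_cross_add_le_one (hdet j i) (hbind j i),
    fun g _ hg => ?_⟩
  rw [← mul_sum, one_div_mul_eq_div]
  gcongr
  simpa using sum_min_one_sum_le_card g hg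

/-- Binding commitments force index-independent unveilings, hence success probability
at most `q/(N+1)`.  Here `p j i b r` is the probability that Alice successfully unveils
bit value `b` for bit `i` of commitment `j` when told index `r`; the binding condition
is `p j i 0 r + p j i 1 s ≤ 1` for all `r, s`, and "unveiled bit values determined by
the per-bit distributions" is expressed by `p j i 0 r + p j i 1 r = 1`.  Then the
unveiling distributions are independent of the told index, and consequently for any
index-independent unveiling distributions `g j r` (probability that commitment `j`
unveils to the value `r`), the success probability of matching a uniformly random
index with one of the `q` commitments is at most `q/(N+1)`. -/
theorem binding_implies_index_independence_and_soundness
    (N q B : ℕ)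
    (p : Fin q → Fin B → Bool → Fin (N + 1) → ℝ)
    (hnonneg : ∀ j i b r, 0 ≤ p j i b r)
    (hdet : ∀ j i r, p j i false r + p j i true r = 1)
    (hbind : ∀ j i r s, p j i false r + p j i true s ≤ 1) :
    (∀ j i b r s, p j i b r = p j i b s) ∧
      (∀ g : Fin q → Fin (N + 1) → ℝ,
        (∀ j r, 0 ≤ g j r) → (∀ j, ∑ r, g j r ≤ 1) →
        ∑ r, (1 / ((N : ℝ) + 1)) * min 1 (∑ j, g j r) ≤ q / ((N : ℝ) + 1)) :=
  binding_implies_index_independence_and_soundness_general N q B p hdet hbind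
end

section
/- Symmetric-subspace overlap identity: with w(a,b) = C(a+b−1, a), the trace Tr(Π_S (|φ⟩⟨φ|^{⊗N} ⊗ (I/d)^{⊗1}) Π_S) over (ℂ^d)^{⊗(N+1)}, where Π_S is the projector onto the symmetric subspace, equals w(N+1,d)/(d·w(N,d)). As a dimension-counting corollary: dim Sym^{N+1}(ℂ^d) / (d · dim Sym^N(ℂ^d)) = (d+N)/(d(N+1)). -/
open Finset

/-- `w a b = C(a+b−1, a)`, the dimension of the symmetric subspace `Sym^a(ℂ^b)`. -/
def w (a b : ℕ) : ℕ := Nat.choose (a + b - 1) a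

/-- The permutation matrix of `σ` acting on `(ℂ^d)^{⊗(N+1)}` in the product basis. -/
def permMatrix (N d : ℕ) (σ : Equiv.Perm (Fin (N + 1))) :
    Matrix (Fin (N + 1) → Fin d) (Fin (N + 1) → Fin d) ℂ :=
  fun i j => if (fun k => i (σ k)) = j then 1 else 0

/-- The orthogonal projector `Π_S` onto the symmetric subspace of `(ℂ^d)^{⊗(N+1)}`. -/
noncomputable def symProj (N d : ℕ) :
    Matrix (Fin (N + 1) → Fin d) (Fin (N + 1) → Fin d) ℂ :=
  (((N + 1).factorial : ℂ))⁻¹ • ∑ σ : Equiv.Perm (Fin (N + 1)), permMatrix N d σ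

/-- The matrix of `|φ⟩⟨φ|^{⊗N} ⊗ (I/d)` on `(ℂ^d)^{⊗(N+1)}` in the product basis. -/
noncomputable def stateMatrix (N d : ℕ) (φ : Fin d → ℂ) :
    Matrix (Fin (N + 1) → Fin d) (Fin (N + 1) → Fin d) ℂ :=
  fun i j =>
    (∏ k : Fin N, φ (i k.castSucc) * (starRingEnd ℂ) (φ (j k.castSucc))) *
      (if i (Fin.last N) = j (Fin.last N) then (1 : ℂ) / d else 0)

/-!
Write `I/d = d⁻¹ ∑ₐ |a⟩⟨a|`, so that the state is an average of pure product states
`|v⟩⟨v|` with `v = φ ⊗ ⋯ ⊗ φ ⊗ eₐ`. For a product vector, `Tr(P_σ |⊗ v⟩⟨⊗ v|) = ∏ₖ ⟨vₖ, v_{σ⁻¹ k}⟩`: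
this is `‖eₐ‖² = 1` if `σ` fixes the last slot and `|φₐ|²` otherwise, so after averaging over `a`
the permutation contributes `1` or `1/d`. As `Π_S` is an idempotent average of the `P_σ`,
`Tr(Π_S ρ Π_S) = Tr(Π_S ρ) = (N! + N · N!/d) / (N+1)! = (d+N)/(d(N+1))`, and the recursion
`(N+1) w(N+1,d) = (N+d) w(N,d)` rewrites this as `w(N+1,d)/(d w(N,d))`.
-/

open Matrix

lemma w_succ_mul {a b : ℕ} (hb : 1 ≤ b) : w (a + 1) b * (a + 1) = (a + b) * w a b := by
  obtain ⟨c, rfl⟩ := Nat.exists_eq_add_of_le' hb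
  simp only [w, show a + 1 + (c + 1) - 1 = a + c + 1 by omega,
    show a + (c + 1) - 1 = a + c by omega]
  rw [show a + (c + 1) = a + c + 1 by omega, Nat.add_one_mul_choose_eq]

lemma w_pos {a b : ℕ} (hb : 1 ≤ b) : 0 < w a b :=
  Nat.choose_pos (by omega)

lemma w_succ_div {K : Type*} [Field K] [CharZero K] {a b : ℕ} (hb : 1 ≤ b) :
    (w (a + 1) b : K) / (b * w a b) = (b + a) / (b * (a + 1)) := by
  have hw : (w a b : K) ≠ 0 := by exact_mod_cast (w_pos hb).ne'
  have hb' : (b : K) ≠ 0 := by exact_mod_cast (show b ≠ 0 by omega)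
  have key : (w (a + 1) b : K) * (a + 1) = (a + b) * w a b := by exact_mod_cast w_succ_mul hb
  rw [div_eq_div_iff (mul_ne_zero hb' hw) (mul_ne_zero hb' (Nat.cast_add_one_ne_zero a))]
  linear_combination b * key

lemma sum_perm_apply_zero {M : Type*} [AddCommMonoid M] (n : ℕ) (g : Fin (n + 1) → M) :
    ∑ σ : Equiv.Perm (Fin (n + 1)), g (σ 0) = n.factorial • ∑ x, g x := by
  rw [← Equiv.Perm.decomposeFin.symm.sum_comp, Fintype.sum_prod_type]
  simp [Equiv.Perm.decomposeFin_symm_apply_zero, Finset.card_univ, Fintype.card_perm,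
    Finset.smul_sum]

lemma sum_perm_apply_last {M : Type*} [AddCommMonoid M] (n : ℕ) (g : Fin (n + 1) → M) :
    ∑ σ : Equiv.Perm (Fin (n + 1)), g (σ (Fin.last n)) = n.factorial • ∑ x, g x := by
  rw [← sum_perm_apply_zero]
  exact Fintype.sum_equiv (Equiv.mulRight Fin.revPerm) _ _ fun σ => by simp

section Perm

variable {N d : ℕ}

lemma permMatrix_mul_apply (σ : Equiv.Perm (Fin (N + 1)))
    (M : Matrix (Fin (N + 1) → Fin d) (Fin (N + 1) → Fin d) ℂ) (i j : Fin (N + 1) → Fin d) :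
    (permMatrix N d σ * M) i j = M (fun k => i (σ k)) j := by
  simp [Matrix.mul_apply, permMatrix]

lemma permMatrix_mul_permMatrix (σ τ : Equiv.Perm (Fin (N + 1))) :
    permMatrix N d σ * permMatrix N d τ = permMatrix N d (σ * τ) := by
  ext i j
  rw [permMatrix_mul_apply]
  rfl

lemma symProj_mul_self : symProj N d * symProj N d = symProj N d := by
  have hsum : (∑ σ : Equiv.Perm (Fin (N + 1)), permMatrix N d σ) *
      ∑ τ : Equiv.Perm (Fin (N + 1)), permMatrix N d τ =
      ((N + 1).factorial : ℂ) • ∑ σ : Equiv.Perm (Fin (N + 1)), permMatrix N d σ := by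
    simp_rw [Finset.sum_mul, Finset.mul_sum, permMatrix_mul_permMatrix]
    have hshift (σ : Equiv.Perm (Fin (N + 1))) :
        ∑ τ, permMatrix N d (σ * τ) = ∑ τ, permMatrix N d τ :=
      Equiv.sum_comp (Equiv.mulLeft σ) (permMatrix N d)
    simp only [hshift, Finset.sum_const, Finset.card_univ, Fintype.card_perm, Fintype.card_fin,
      Nat.cast_smul_eq_nsmul]
  have hfac : ((N + 1).factorial : ℂ) ≠ 0 := Nat.cast_ne_zero.mpr (Nat.factorial_ne_zero _)
  rw [symProj, Matrix.smul_mul, Matrix.mul_smul, hsum, smul_smul, smul_smul,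
    inv_mul_cancel_right₀ hfac]

end Perm

lemma dotProduct_self_star_eq_sum_norm_sq {n : Type*} [Fintype n] (v : n → ℂ) :
    v ⬝ᵥ star v = ((∑ a, ‖v a‖ ^ 2 : ℝ) : ℂ) := by
  simp [dotProduct, Complex.mul_conj, Complex.normSq_eq_norm_sq]

section Overlap

variable {ι : Type*} [Fintype ι] [DecidableEq ι] {d : ℕ} {φ u : Fin d → ℂ} {σ : Equiv.Perm ι}
  {p : ι}

lemma prod_dotProduct_update_of_apply_eq (hφ : φ ⬝ᵥ star φ = 1) (hp : σ p = p) :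
    ∏ k, Function.update (fun _ => φ) p u (σ.symm k) ⬝ᵥ star (Function.update (fun _ => φ) p u k) =
      u ⬝ᵥ star u := by
  rw [Fintype.prod_eq_single p fun k hk => ?_]
  · simp [σ.symm_apply_eq.mpr hp.symm]
  · have hk' : σ.symm k ≠ p := fun h => hk ((σ.symm_apply_eq.mp h).trans hp)
    simp [Function.update_of_ne hk, Function.update_of_ne hk', hφ]

lemma prod_dotProduct_update_of_apply_ne (hφ : φ ⬝ᵥ star φ = 1) (hp : σ p ≠ p) :
    ∏ k, Function.update (fun _ => φ) p u (σ.symm k) ⬝ᵥ star (Function.update (fun _ => φ) p u k) =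
      (φ ⬝ᵥ star u) * (u ⬝ᵥ star φ) := by
  have hp' : σ.symm p ≠ p := fun h => hp (σ.symm_apply_eq.mp h).symm
  rw [Fintype.prod_eq_mul p (σ p) hp.symm fun k ⟨hkp, hkσ⟩ => ?_]
  · simp [Function.update_of_ne hp', Function.update_of_ne hp]
  · have hk' : σ.symm k ≠ p := fun h => hkσ (σ.symm_apply_eq.mp h)
    simp [Function.update_of_ne hkp, Function.update_of_ne hk', hφ]

end Overlap

/-- `|v₀ ⊗ ⋯ ⊗ v_N⟩⟨v₀ ⊗ ⋯ ⊗ v_N|` on `(ℂ^d)^{⊗(N+1)}`. -/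
def pureTensorMatrix (N d : ℕ) (v : Fin (N + 1) → Fin d → ℂ) :
    Matrix (Fin (N + 1) → Fin d) (Fin (N + 1) → Fin d) ℂ :=
  fun i j => ∏ k, v k (i k) * star (v k (j k))

section Trace

variable {N d : ℕ}

lemma trace_permMatrix_mul_pureTensorMatrix (σ : Equiv.Perm (Fin (N + 1)))
    (v : Fin (N + 1) → Fin d → ℂ) :
    (permMatrix N d σ * pureTensorMatrix N d v).trace = ∏ k, v (σ.symm k) ⬝ᵥ star (v k) := by
  have hreindex (i : Fin (N + 1) → Fin d) :
      ∏ k, v k (i (σ k)) * star (v k (i k)) = ∏ k, v (σ.symm k) (i k) * star (v k (i k)) := by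
    rw [Finset.prod_mul_distrib, Finset.prod_mul_distrib,
      ← Equiv.prod_comp σ (fun k => v (σ.symm k) (i k))]
    simp
  simp only [Matrix.trace, Matrix.diag, permMatrix_mul_apply, pureTensorMatrix, hreindex,
    dotProduct, Fintype.prod_sum, Pi.star_apply]

lemma stateMatrix_eq_smul_sum (φ : Fin d → ℂ) :
    stateMatrix N d φ = (d : ℂ)⁻¹ •
      ∑ a, pureTensorMatrix N d (Function.update (fun _ => φ) (Fin.last N) (Pi.single a 1)) := by
  ext i j
  simp only [stateMatrix, one_div, mul_ite, mul_zero, Matrix.smul_apply, Matrix.sum_apply,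
    pureTensorMatrix, RCLike.star_def, Fin.prod_univ_castSucc, Fin.castSucc_ne_last, ne_eq,
    not_false_eq_true, Function.update_of_ne, Function.update_self, Pi.single_apply,
    MonoidWithZeroHom.map_ite_one_zero, mul_one, Finset.sum_ite_eq, Finset.mem_univ, if_true,
    smul_eq_mul]
  split_ifs <;> ring

lemma trace_permMatrix_mul_stateMatrix (hd : 1 ≤ d) {φ : Fin d → ℂ} (hφ : φ ⬝ᵥ star φ = 1)
    (σ : Equiv.Perm (Fin (N + 1))) :
    (permMatrix N d σ * stateMatrix N d φ).trace =
      if σ (Fin.last N) = Fin.last N then 1 else (d : ℂ)⁻¹ := by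
  have hd' : (d : ℂ) ≠ 0 := Nat.cast_ne_zero.mpr (by omega)
  rw [stateMatrix_eq_smul_sum, Matrix.mul_smul, Matrix.mul_sum, Matrix.trace_smul,
    Matrix.trace_sum]
  simp_rw [trace_permMatrix_mul_pureTensorMatrix]
  split_ifs with h
  · simp [prod_dotProduct_update_of_apply_eq hφ h, hd']
  · have hφ' : ∑ a, φ a * starRingEnd ℂ (φ a) = 1 := hφ
    simp [prod_dotProduct_update_of_apply_ne hφ h, hφ']

lemma trace_symProj_mul_stateMatrix (hd : 1 ≤ d) {φ : Fin d → ℂ} (hφ : φ ⬝ᵥ star φ = 1) :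
    (symProj N d * stateMatrix N d φ).trace = (d + N) / (d * (N + 1)) := by
  have hd' : (d : ℂ) ≠ 0 := Nat.cast_ne_zero.mpr (by omega)
  have hfac : (N.factorial : ℂ) ≠ 0 := Nat.cast_ne_zero.mpr (Nat.factorial_ne_zero _)
  rw [symProj, Matrix.smul_mul, Matrix.trace_smul, Matrix.sum_mul, Matrix.trace_sum]
  simp_rw [trace_permMatrix_mul_stateMatrix hd hφ]
  rw [sum_perm_apply_last (g := fun x => if x = Fin.last N then 1 else (d : ℂ)⁻¹),
    Fin.sum_univ_castSucc]
  simp only [Nat.factorial_succ, Nat.cast_mul, Nat.cast_add, Nat.cast_one, Fin.castSucc_ne_last,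
    if_false, if_true, Finset.sum_const, Finset.card_univ, Fintype.card_fin, nsmul_eq_mul,
    smul_eq_mul]
  field_simp
  ring

end Trace

/-- Symmetric-subspace overlap identity:
`Tr(Π_S (|φ⟩⟨φ|^{⊗N} ⊗ I/d) Π_S) = w(N+1,d)/(d·w(N,d))` for any unit vector `φ`,
together with the dimension-counting corollary
`dim Sym^{N+1}(ℂ^d) / (d · dim Sym^N(ℂ^d)) = (d+N)/(d(N+1))`. -/
theorem symmetric_subspace_overlap
    (N d : ℕ) (hd : 1 ≤ d) (φ : Fin d → ℂ) (hφ : ∑ a, ‖φ a‖ ^ 2 = 1) :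
    (symProj N d * stateMatrix N d φ * symProj N d).trace =
        (w (N + 1) d : ℂ) / (d * w N d) ∧
      (w (N + 1) d : ℚ) / (d * w N d) = ((d : ℚ) + N) / (d * (N + 1)) := by
  have hunit : φ ⬝ᵥ star φ = 1 := by
    rw [dotProduct_self_star_eq_sum_norm_sq, hφ, Complex.ofReal_one]
  refine ⟨?_, w_succ_div hd⟩
  rw [Matrix.trace_mul_cycle, symProj_mul_self, trace_symProj_mul_stateMatrix hd hunit,
    w_succ_div hd]
end
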